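/- Let M be a maximum matching and M' any matching in a finite simple graph G. In the symmetric difference M △ M', let α1, α3, and α_{≥5} denote the numbers of connected components that are augmenting paths for M' of length 1, of length 3, and of length at least 5, respectively. Then α3 + 2·α_{≥5} ≤ |M'| and α1 + α3 + α_{≥5} = |M| − |M'|. -/

import Mathlib

/-!
Write `α` for the number of all augmenting path components of `M ∆ M'`. Distinct components are
disjoint, and one of length `k` (necessarily odd) has `(k - 1) / 2` edges in `M'` and one more in
`M`; counting the `M'`-edges of the components of length at least 3 gives the inequality.
Flipping `M'` along all components gives a matching of size `|M'| + α`, so `α ≤ |M| - |M'|` by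
maximality. Conversely, every vertex covered by `M` but not by `M'` starts a maximal alternating
walk. Either it ends at a vertex covered by `M'` only, and distinct starts give distinct ends since
the walk can be retraced backwards, or it is an augmenting path component, which has two such
starts. As `2 (|M| - |M'|)` is the number of vertices covered by `M` only minus the number covered
by `M'` only, `|M| - |M'| ≤ α`.
-/

open scoped Classical symmDiff
open Real

noncomputable section

/-- `E` is the edge set of a simple graph: it contains no loops. -/
def EdgeSimple {V : Type*} (E : Finset (Sym2 V)) : Prop :=
  ∀ e ∈ E, ¬ e.IsDiag

/-- `M` is a matching: it has no loops and distinct edges share no vertex. -/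
def IsMatchingSet {V : Type*} (M : Finset (Sym2 V)) : Prop :=
  (∀ e ∈ M, ¬ e.IsDiag) ∧
    ∀ e ∈ M, ∀ f ∈ M, e ≠ f → ∀ v : V, v ∈ e → v ∉ f

/-- The maximum matching size of the graph with edge set `E`. -/
def matchNum {V : Type*} (E : Finset (Sym2 V)) : ℕ :=
  (E.powerset.filter fun M => IsMatchingSet M).sup Finset.card

/-- The degree of the vertex `v` in the edge set `E`. -/
def edeg {V : Type*} (E : Finset (Sym2 V)) (v : V) : ℕ :=
  (E.filter fun e => v ∈ e).card

/-- The expected maximum matching size of a `p`-realization of `E`, where each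
edge of `E` is kept independently with probability `p`. -/
def expMatch {V : Type*} (p : ℝ) (E : Finset (Sym2 V)) : ℝ :=
  ∑ S ∈ E.powerset, p ^ S.card * (1 - p) ^ (E.card - S.card) * (matchNum S : ℝ)

/-- The set of vertices covered by the edge set `M`. -/
def mVerts {V : Type*} [Fintype V] (M : Finset (Sym2 V)) : Finset V :=
  Finset.univ.filter fun v => ∃ e ∈ M, v ∈ e

/-- `P` is a connected component of the symmetric difference `M ∆ M'` that is an
augmenting path of length `k` for `M'`: its edges form a (simple) path on `k + 1`
distinct vertices, edges at even positions belong to `M` and edges at odd positions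
belong to `M'`, and its two endpoint vertices are not covered by `M'`. -/
def IsAugPathComp {V : Type*} [DecidableEq V] (M M' P : Finset (Sym2 V)) (k : ℕ) : Prop :=
  P ⊆ M ∆ M' ∧
  (∀ e ∈ M ∆ M', e ∉ P → ∀ w : V, w ∈ e → ∀ g ∈ P, w ∉ g) ∧
  ∃ w : Fin (k + 1) → V, Function.Injective w ∧
    P = Finset.image (fun i : Fin k => s(w i.castSucc, w i.succ)) Finset.univ ∧
    (∀ i : Fin k, (i : ℕ) % 2 = 0 → s(w i.castSucc, w i.succ) ∈ M) ∧
    (∀ i : Fin k, (i : ℕ) % 2 = 1 → s(w i.castSucc, w i.succ) ∈ M') ∧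
    (∀ e ∈ M', w 0 ∉ e) ∧ (∀ e ∈ M', w (Fin.last k) ∉ e)

open Finset

namespace Finset

theorem card_filter_range_mod_two_eq_one (k : ℕ) : #{i ∈ range k | i % 2 = 1} = k / 2 := by
  induction k with
  | zero => simp
  | succ n ih =>
    rw [range_add_one, filter_insert]
    split_ifs with h
    · rw [card_insert_of_notMem (by simp), ih]; omega
    · rw [ih]; omega

theorem card_inter_add_card_inter_of_subset_symmDiff {α : Type*} [DecidableEq α]
    {P s t : Finset α} (hP : P ⊆ s ∆ t) : #(P ∩ s) + #(P ∩ t) = #P := by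
  rw [← card_union_of_disjoint, ← inter_union_distrib_left, inter_eq_left.2]
  · exact hP.trans symmDiff_subset_union
  · refine disjoint_left.2 fun e hs ht => ?_
    rcases mem_symmDiff.1 (hP (mem_inter.1 hs).1) with ⟨-, h⟩ | ⟨-, h⟩
    exacts [h (mem_inter.1 ht).2, h (mem_inter.1 hs).2]

theorem card_eq_card_filter_one_add_three_add_ge_five {ι : Type*} {s : Finset ι} {f : ι → ℕ}
    (hf : ∀ i ∈ s, f i % 2 = 1) :
    #s = #{i ∈ s | f i = 1} + #{i ∈ s | f i = 3} + #{i ∈ s | 5 ≤ f i} := by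
  simp only [card_filter, card_eq_sum_ones s, ← sum_add_distrib]
  refine sum_congr rfl fun i hi => ?_
  have := hf i hi
  split_ifs <;> omega

theorem card_filter_three_add_two_mul_ge_five_le {ι : Type*} (s : Finset ι) (f : ι → ℕ) :
    #{i ∈ s | f i = 3} + 2 * #{i ∈ s | 5 ≤ f i} ≤ ∑ i ∈ s, f i / 2 := by
  simp only [card_filter, mul_sum, ← sum_add_distrib]
  refine sum_le_sum fun i _ => ?_
  split_ifs <;> omega

end Finset

section Matching

variable {V : Type*} {M N : Finset (Sym2 V)}

theorem IsMatchingSet.eq_of_mem_of_mem (hM : IsMatchingSet M) {e f : Sym2 V} {v : V}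
    (he : e ∈ M) (hf : f ∈ M) (hve : v ∈ e) (hvf : v ∈ f) : e = f :=
  by_contra fun hne => hM.2 e he f hf hne v hve hvf

theorem IsMatchingSet.mono (hM : IsMatchingSet M) (hNM : N ⊆ M) : IsMatchingSet N :=
  ⟨fun e he => hM.1 e (hNM he), fun e he f hf => hM.2 e (hNM he) f (hNM hf)⟩

theorem IsMatchingSet.union [DecidableEq V] (hM : IsMatchingSet M) (hN : IsMatchingSet N)
    (hMN : ∀ e ∈ M, ∀ f ∈ N, ∀ v ∈ e, v ∉ f) : IsMatchingSet (M ∪ N) := by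
  refine ⟨fun e he => (mem_union.1 he).elim (hM.1 e) (hN.1 e), fun e he f hf hne v hve hvf => ?_⟩
  rcases mem_union.1 he with he | he <;> rcases mem_union.1 hf with hf | hf
  · exact hM.2 e he f hf hne v hve hvf
  · exact hMN e he f hf v hve hvf
  · exact hMN f hf e he v hvf hve
  · exact hN.2 e he f hf hne v hve hvf

theorem IsMatchingSet.card_mVerts [Fintype V] [DecidableEq V] (hM : IsMatchingSet M) :
    #(mVerts M) = 2 * #M := by
  have hverts : mVerts M = M.biUnion Sym2.toFinset := by ext v; simp [mVerts]
  have hdisj : (M : Set (Sym2 V)).PairwiseDisjoint Sym2.toFinset :=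
    fun e he f hf hne => disjoint_left.2 fun v hve hvf =>
      hM.2 e he f hf hne v (Sym2.mem_toFinset.1 hve) (Sym2.mem_toFinset.1 hvf)
  rw [hverts, card_biUnion hdisj,
    sum_congr rfl fun e he => by rw [Sym2.card_toFinset, if_neg (hM.1 e he)],
    sum_const, smul_eq_mul, mul_comm]

end Matching

section AlternatingWalk

variable {V : Type*} {M M' : Finset (Sym2 V)}

/-- The matching that contains the `i`-th edge of an alternating walk. -/
def altLayer (M M' : Finset (Sym2 V)) (i : ℕ) : Finset (Sym2 V) :=
  if i % 2 = 0 then M else M'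

theorem altLayer_congr {i j : ℕ} (h : i % 2 = j % 2) : altLayer M M' i = altLayer M M' j := by
  simp only [altLayer, h]

theorem IsMatchingSet.altLayer (hM : IsMatchingSet M) (hM' : IsMatchingSet M') (i : ℕ) :
    IsMatchingSet (altLayer M M' i) := by
  unfold _root_.altLayer; split_ifs <;> assumption

theorem mem_altLayer_of_mod_two {e : Sym2 V} {i : ℕ} (hM : i % 2 = 0 → e ∈ M)
    (hM' : i % 2 = 1 → e ∈ M') : e ∈ altLayer M M' i := by
  unfold altLayer; split_ifs with h
  · exact hM h
  · exact hM' (by omega)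

theorem notMem_altLayer_succ_of_mem_symmDiff [DecidableEq V] {e : Sym2 V} {i : ℕ}
    (hD : e ∈ M ∆ M') (he : e ∈ altLayer M M' i) : e ∉ altLayer M M' (i + 1) := by
  unfold altLayer at *
  rcases mem_symmDiff.1 hD with ⟨h, h'⟩ | ⟨h, h'⟩ <;> split_ifs at * <;> first | omega | tauto

def walkEdges (w : ℕ → V) (k : ℕ) : Finset (Sym2 V) :=
  (range k).image fun i => s(w i, w (i + 1))

theorem mem_walkEdges {w : ℕ → V} {k : ℕ} {e : Sym2 V} :
    e ∈ walkEdges w k ↔ ∃ i < k, s(w i, w (i + 1)) = e := by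
  simp [walkEdges]

theorem walkEdge_mem_walkEdges {w : ℕ → V} {k i : ℕ} (hi : i < k) :
    s(w i, w (i + 1)) ∈ walkEdges w k :=
  mem_walkEdges.2 ⟨i, hi, rfl⟩

theorem exists_le_eq_of_mem_walkEdges {w : ℕ → V} {k : ℕ} {g : Sym2 V} {x : V}
    (hg : g ∈ walkEdges w k) (hxg : x ∈ g) : ∃ i ≤ k, x = w i := by
  obtain ⟨j, hj, rfl⟩ := mem_walkEdges.1 hg
  rcases Sym2.mem_iff.1 hxg with rfl | rfl
  exacts [⟨j, hj.le, rfl⟩, ⟨j + 1, hj, rfl⟩]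

/-- The edges lie alternately in `M \ M'` and `M' \ M`, starting with `M \ M'`. -/
structure IsAltWalk (M M' : Finset (Sym2 V)) (k : ℕ) (w : ℕ → V) : Prop where
  injOn : ∀ i ≤ k, ∀ j ≤ k, w i = w j → i = j
  mem_altLayer : ∀ i < k, s(w i, w (i + 1)) ∈ altLayer M M' i
  notMem_altLayer : ∀ i < k, s(w i, w (i + 1)) ∉ altLayer M M' (i + 1)
  head_notMem : ∀ e ∈ M', w 0 ∉ e

structure IsAugWalk (M M' : Finset (Sym2 V)) (k : ℕ) (w : ℕ → V) : Prop
    extends IsAltWalk M M' k w where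
  last_notMem : ∀ e ∈ M', w k ∉ e

namespace IsAltWalk

variable {k : ℕ} {w : ℕ → V}

theorem walkEdges_subset [DecidableEq V] (hw : IsAltWalk M M' k w) :
    walkEdges w k ⊆ M ∆ M' := by
  intro e he
  obtain ⟨i, hi, rfl⟩ := mem_walkEdges.1 he
  have hin := hw.mem_altLayer i hi
  have hout := hw.notMem_altLayer i hi
  unfold altLayer at hin hout
  rw [mem_symmDiff]
  split_ifs at hin hout <;> first | omega | tauto

theorem injOn_walkEdge (hw : IsAltWalk M M' k w) :
    Set.InjOn (fun i => s(w i, w (i + 1))) (Set.Iio k) := by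
  intro i hi j hj hij
  simp only [Set.mem_Iio] at hi hj
  rcases Sym2.eq_iff.1 hij with ⟨h, -⟩ | ⟨h, h'⟩
  · exact hw.injOn i (by omega) j (by omega) h
  · have := hw.injOn i (by omega) (j + 1) (by omega) h
    have := hw.injOn (i + 1) (by omega) j (by omega) h'
    omega

theorem card_walkEdges (hw : IsAltWalk M M' k w) : #(walkEdges w k) = k := by
  rw [walkEdges, card_image_of_injOn (by simpa using hw.injOn_walkEdge), card_range]

theorem eq_walkEdge_of_mem_altLayer (hw : IsAltWalk M M' k w) (hM : IsMatchingSet M)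
    (hM' : IsMatchingSet M') {i j : ℕ} (hi : i ≤ k) {f : Sym2 V} (hf : f ∈ altLayer M M' j)
    (hif : w i ∈ f) :
    (∃ l < k, l % 2 = j % 2 ∧ (l = i ∨ l + 1 = i) ∧ f = s(w l, w (l + 1))) ∨
      (i = k ∧ k % 2 = j % 2) := by
  have hlayer := hM.altLayer hM' j
  by_cases hij : i % 2 = j % 2
  · rcases hi.lt_or_eq with hi | rfl
    · have hedge := altLayer_congr hij ▸ hw.mem_altLayer i hi
      exact Or.inl ⟨i, hi, hij, Or.inl rfl,
        hlayer.eq_of_mem_of_mem hf hedge hif (Sym2.mem_mk_left _ _)⟩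
    · exact Or.inr ⟨rfl, hij⟩
  · obtain rfl | hi0 := Nat.eq_zero_or_pos i
    · have hfM' : f ∈ M' := by rwa [altLayer_congr (j := 1) (by omega)] at hf
      exact absurd hif (hw.head_notMem f hfM')
    · have hedge := hw.mem_altLayer (i - 1) (by omega)
      rw [altLayer_congr (j := j) (by omega), Nat.sub_add_cancel hi0] at hedge
      refine Or.inl ⟨i - 1, by omega, by omega, Or.inr (by omega), ?_⟩
      rw [Nat.sub_add_cancel hi0]
      exact hlayer.eq_of_mem_of_mem hf hedge hif (Sym2.mem_mk_right _ _)

theorem update (hw : IsAltWalk M M' k w) {u : V} (hu : ∀ i ≤ k, w i ≠ u)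
    (hin : s(w k, u) ∈ altLayer M M' k) (hout : s(w k, u) ∉ altLayer M M' (k + 1)) :
    IsAltWalk M M' (k + 1) (Function.update w (k + 1) u) := by
  set w' := Function.update w (k + 1) u
  have hw'_le : ∀ i ≤ k, w' i = w i := fun i hi => Function.update_of_ne (by omega) _ _
  have hw'_succ : w' (k + 1) = u := Function.update_self _ _ _
  have hedge : ∀ i < k + 1,
      s(w' i, w' (i + 1)) = if i < k then s(w i, w (i + 1)) else s(w k, u) := by
    intro i hi
    split_ifs with hik
    · rw [hw'_le i hik.le, hw'_le (i + 1) hik]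
    · obtain rfl : i = k := by omega
      rw [hw'_le i le_rfl, hw'_succ]
  refine ⟨fun i hi j hj hij => ?_, fun i hi => ?_, fun i hi => ?_, ?_⟩
  · rcases hi.lt_or_eq with hi | rfl <;> rcases hj.lt_or_eq with hj | rfl
    · rw [hw'_le i (by omega), hw'_le j (by omega)] at hij
      exact hw.injOn i (by omega) j (by omega) hij
    · rw [hw'_le i (by omega), hw'_succ] at hij
      exact absurd hij (hu i (by omega))
    · rw [hw'_le j (by omega), hw'_succ] at hij
      exact absurd hij.symm (hu j (by omega))
    · rfl
  · rw [hedge i hi]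
    split_ifs with hik
    · exact hw.mem_altLayer i hik
    · rwa [show i = k by omega]
  · rw [hedge i hi]
    split_ifs with hik
    · exact hw.notMem_altLayer i hik
    · rwa [show i = k by omega]
  · rw [hw'_le 0 (by omega)]
    exact hw.head_notMem

theorem exists_extend (hw : IsAltWalk M M' k w) (hM : IsMatchingSet M) (hM' : IsMatchingSet M')
    {f : Sym2 V} (hf : f ∈ altLayer M M' k) (hkf : w k ∈ f) :
    ∃ w' : ℕ → V, IsAltWalk M M' (k + 1) w' ∧ w' 0 = w 0 := by
  obtain ⟨u, rfl⟩ := Sym2.mem_iff_exists.1 hkf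
  have hfresh : ∀ i ≤ k, w i ≠ u := by
    rintro i hi rfl
    rcases hw.eq_walkEdge_of_mem_altLayer hM hM' hi hf (Sym2.mem_mk_right _ _) with
      ⟨l, hl, hlk, hli, hfl⟩ | ⟨rfl, -⟩
    · have hkl : w k ∈ s(w l, w (l + 1)) := hfl ▸ Sym2.mem_mk_left _ _
      rcases Sym2.mem_iff.1 hkl with h | h
      · have := hw.injOn k le_rfl l hl.le h; omega
      · have := hw.injOn k le_rfl (l + 1) hl h; omega
    · exact (hM.altLayer hM' i).1 _ hf (Sym2.mk_isDiag_iff.2 rfl)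
  have hnext : s(w k, u) ∉ altLayer M M' (k + 1) := by
    intro hf'
    rcases hw.eq_walkEdge_of_mem_altLayer hM hM' le_rfl hf' (Sym2.mem_mk_left _ _) with
      ⟨l, hl, -, hli, hfl⟩ | ⟨-, h⟩
    · obtain rfl : l + 1 = k := by omega
      exact hw.notMem_altLayer l hl (hfl ▸ hf)
    · omega
  exact ⟨_, hw.update hfresh hf hnext, Function.update_of_ne (by omega) _ _⟩

theorem lt_card [Fintype V] (hw : IsAltWalk M M' k w) : k < Fintype.card V := by
  have := card_le_card_of_injOn w (s := range (k + 1)) (t := univ)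
    (fun _ _ => mem_coe.2 (mem_univ _))
    fun i hi j hj => hw.injOn i (Nat.le_of_lt_succ (mem_range.1 hi)) j
      (Nat.le_of_lt_succ (mem_range.1 hj))
  simpa using this

/-- Edges of the same layer at a common vertex coincide, so the two walks agree backwards from
their last vertex. -/
theorem head_eq_of_last_eq (hM : IsMatchingSet M) (hM' : IsMatchingSet M') {k' : ℕ}
    {w' : ℕ → V} (hw : IsAltWalk M M' k w) (hw' : IsAltWalk M M' k' w') (hkk' : k % 2 = k' % 2)
    (hlast : w k = w' k') : w 0 = w' 0 := by
  wlog hle : k ≤ k' generalizing k k' w w'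
  · exact (this hw' hw hkk'.symm hlast.symm (by omega)).symm
  have hback : ∀ i ≤ k, w (k - i) = w' (k' - i) := by
    intro i
    induction i with
    | zero => simpa using hlast
    | succ i ih =>
      intro hi
      have hv := ih (by omega)
      have he := hw.mem_altLayer (k - (i + 1)) (by omega)
      have he' := hw'.mem_altLayer (k' - (i + 1)) (by omega)
      rw [show k - (i + 1) + 1 = k - i by omega] at he
      rw [show k' - (i + 1) + 1 = k' - i by omega, ← hv,
        altLayer_congr (j := k - (i + 1)) (by omega)] at he'
      exact Sym2.congr_left.1 ((hM.altLayer hM' _).eq_of_mem_of_mem he he'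
        (Sym2.mem_mk_right _ _) (Sym2.mem_mk_right _ _))
  have h0 := hback k le_rfl
  rw [Nat.sub_self] at h0
  rcases hle.lt_or_eq with hlt | rfl
  · have he := hw'.mem_altLayer (k' - k - 1) (by omega)
    rw [altLayer_congr (j := 1) (by omega), show k' - k - 1 + 1 = k' - k by omega, ← h0] at he
    exact absurd (Sym2.mem_mk_right _ _) (hw.head_notMem _ he)
  · simpa using h0

theorem exists_maximal [Fintype V] (hM : IsMatchingSet M) (hM' : IsMatchingSet M') {v : V}
    (hv : ∀ e ∈ M', v ∉ e) :
    ∃ k w, IsAltWalk M M' k w ∧ w 0 = v ∧ ∀ f ∈ altLayer M M' k, w k ∉ f := by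
  classical
  let walkFrom : ℕ → Prop := fun k => ∃ w, IsAltWalk M M' k w ∧ w 0 = v
  have h0 : walkFrom 0 :=
    ⟨fun _ => v, ⟨fun i hi j hj _ => by omega, by omega, by omega, hv⟩, rfl⟩
  set k := Nat.findGreatest walkFrom (Fintype.card V)
  obtain ⟨w, hw, hw0⟩ : walkFrom k := Nat.findGreatest_spec (Nat.zero_le _) h0
  refine ⟨k, w, hw, hw0, fun f hf hkf => ?_⟩
  obtain ⟨w', hw', hw'0⟩ := hw.exists_extend hM hM' hf hkf
  exact Nat.findGreatest_is_greatest (Nat.lt_succ_self k) hw'.lt_card.le ⟨w', hw', hw'0.trans hw0⟩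

end IsAltWalk

namespace IsAugWalk

variable {k : ℕ} {w : ℕ → V}

theorem mod_two_eq_one (hw : IsAugWalk M M' k w) (hk : 1 ≤ k) : k % 2 = 1 := by
  by_contra hodd
  have he := hw.mem_altLayer (k - 1) (by omega)
  rw [altLayer_congr (j := 1) (by omega), Nat.sub_add_cancel hk] at he
  exact hw.last_notMem _ he (Sym2.mem_mk_right _ _)

theorem eq_head_or_eq_last (hw : IsAugWalk M M' k w) {x : V} (hx : ∀ e ∈ M', x ∉ e)
    {g : Sym2 V} (hg : g ∈ walkEdges w k) (hxg : x ∈ g) : x = w 0 ∨ x = w k := by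
  obtain ⟨i, hi, rfl⟩ := exists_le_eq_of_mem_walkEdges hg hxg
  by_contra hend
  have hi0 : 0 < i := Nat.pos_of_ne_zero fun h => hend (Or.inl (by rw [h]))
  have hik : i < k := hi.lt_of_ne fun h => hend (Or.inr (by rw [h]))
  by_cases hpar : i % 2 = 1
  · have he := hw.mem_altLayer i hik
    rw [altLayer_congr (j := 1) hpar] at he
    exact hx _ he (Sym2.mem_mk_left _ _)
  · have he := hw.mem_altLayer (i - 1) (by omega)
    rw [altLayer_congr (j := 1) (by omega), Nat.sub_add_cancel hi0] at he
    exact hx _ he (Sym2.mem_mk_right _ _)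

theorem isolated [DecidableEq V] (hw : IsAugWalk M M' k w) (hM : IsMatchingSet M)
    (hM' : IsMatchingSet M') :
    ∀ e ∈ M ∆ M', e ∉ walkEdges w k → ∀ x ∈ e, ∀ g ∈ walkEdges w k, x ∉ g := by
  intro e he heP x hxe g hg hxg
  obtain ⟨i, hi, rfl⟩ := exists_le_eq_of_mem_walkEdges hg hxg
  obtain ⟨l, hl⟩ : ∃ l, l < 2 ∧ e ∈ altLayer M M' l := by
    rcases mem_symmDiff.1 he with ⟨h, -⟩ | ⟨h, -⟩
    exacts [⟨0, by omega, h⟩, ⟨1, by omega, h⟩]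
  rcases hw.eq_walkEdge_of_mem_altLayer hM hM' hi hl.2 hxe with ⟨m, hm, -, -, rfl⟩ | ⟨rfl, hkl⟩
  · exact heP (walkEdge_mem_walkEdges hm)
  · obtain ⟨j, hj, -⟩ := mem_walkEdges.1 hg
    have hodd := hw.mod_two_eq_one (by omega)
    obtain rfl : l = 1 := by omega
    exact hw.last_notMem e hl.2 hxe

end IsAugWalk

theorem walkEdges_subset_of_isolated {k : ℕ} {w : ℕ → V} {Q D : Finset (Sym2 V)}
    (hD : walkEdges w k ⊆ D)
    (hQ : ∀ e ∈ D, e ∉ Q → ∀ x ∈ e, ∀ g ∈ Q, x ∉ g) (hPQ : ¬Disjoint (walkEdges w k) Q) :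
    walkEdges w k ⊆ Q := by
  have hstep : ∀ i, i + 1 < k →
      (s(w i, w (i + 1)) ∈ Q ↔ s(w (i + 1), w (i + 1 + 1)) ∈ Q) := fun i hi =>
    ⟨fun h => by_contra fun h' => hQ _ (hD (walkEdge_mem_walkEdges hi)) h' _
        (Sym2.mem_mk_left _ _) _ h (Sym2.mem_mk_right _ _),
      fun h => by_contra fun h' => hQ _ (hD (walkEdge_mem_walkEdges (by omega))) h' _
        (Sym2.mem_mk_right _ _) _ h (Sym2.mem_mk_left _ _)⟩
  have hall : ∀ i < k, (s(w i, w (i + 1)) ∈ Q ↔ s(w 0, w (0 + 1)) ∈ Q) := by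
    intro i
    induction i with
    | zero => exact fun _ => Iff.rfl
    | succ i ih => exact fun hi => (hstep i hi).symm.trans (ih (by omega))
  obtain ⟨e, he, heQ⟩ := not_disjoint_iff.1 hPQ
  obtain ⟨j, hj, rfl⟩ := mem_walkEdges.1 he
  intro e' he'
  obtain ⟨i, hi, rfl⟩ := mem_walkEdges.1 he'
  exact (hall i hi).2 ((hall j hj).1 heQ)

end AlternatingWalk

section AugmentingPathComponent

variable {V : Type*} [DecidableEq V] {M M' P Q : Finset (Sym2 V)} {k l : ℕ}

theorem IsAltWalk.card_walkEdges_inter_snd {w : ℕ → V} (hw : IsAltWalk M M' k w) :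
    #(walkEdges w k ∩ M') = k / 2 := by
  have himage : walkEdges w k ∩ M' =
      {i ∈ range k | i % 2 = 1}.image fun i => s(w i, w (i + 1)) := by
    ext e
    simp only [mem_inter, mem_walkEdges, mem_image, mem_filter, mem_range]
    constructor
    · rintro ⟨⟨i, hi, rfl⟩, he⟩
      refine ⟨i, ⟨hi, by_contra fun hpar => hw.notMem_altLayer i hi ?_⟩, rfl⟩
      rwa [altLayer_congr (j := 1) (by omega)]
    · rintro ⟨i, ⟨hi, hpar⟩, rfl⟩
      have he := hw.mem_altLayer i hi
      rw [altLayer_congr (j := 1) hpar] at he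
      exact ⟨⟨i, hi, rfl⟩, he⟩
  rw [himage,
    card_image_of_injOn (hw.injOn_walkEdge.mono fun i hi => mem_range.1 (mem_filter.1 hi).1),
    card_filter_range_mod_two_eq_one]

theorem IsAugPathComp.exists_isAugWalk (hP : IsAugPathComp M M' P k) :
    ∃ w : ℕ → V, IsAugWalk M M' k w ∧ P = walkEdges w k := by
  obtain ⟨hPD, -, w, hinj, rfl, hM, hM', hhead, hlast⟩ := hP
  let wn : ℕ → V := fun i => w (Fin.clamp i k)
  have hwn : ∀ i (hi : i ≤ k), wn i = w ⟨i, by omega⟩ := fun i hi =>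
    congrArg w (Fin.ext (by simp [Fin.clamp, hi]))
  have hedge : ∀ i (hi : i < k),
      s(wn i, wn (i + 1)) = s(w (Fin.castSucc ⟨i, hi⟩), w (Fin.succ ⟨i, hi⟩)) := fun i hi => by
    rw [hwn i hi.le, hwn (i + 1) hi]; rfl
  have hmem : ∀ i (hi : i < k), s(wn i, wn (i + 1)) ∈ altLayer M M' i := fun i hi =>
    hedge i hi ▸ mem_altLayer_of_mod_two (hM ⟨i, hi⟩) (hM' ⟨i, hi⟩)
  have hwalk : walkEdges wn k = image (fun i : Fin k => s(w i.castSucc, w i.succ)) univ := by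
    ext e
    simp only [mem_walkEdges, mem_image, mem_univ, true_and]
    constructor
    · rintro ⟨i, hi, rfl⟩
      exact ⟨⟨i, hi⟩, (hedge i hi).symm⟩
    · rintro ⟨i, rfl⟩
      exact ⟨i, i.2, hedge i i.2⟩
  refine ⟨wn, ⟨⟨fun i hi j hj hij => ?_, hmem, fun i hi => ?_, ?_⟩, ?_⟩, hwalk.symm⟩
  · rw [hwn i hi, hwn j hj] at hij
    exact Fin.mk.inj (hinj hij)
  · exact notMem_altLayer_succ_of_mem_symmDiff (hPD (hwalk ▸ walkEdge_mem_walkEdges hi)) (hmem i hi)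
  · simpa [hwn 0 (Nat.zero_le k)] using hhead
  · rw [hwn k le_rfl]
    exact hlast

theorem isAugPathComp_walkEdges (hM : IsMatchingSet M) (hM' : IsMatchingSet M') {w : ℕ → V}
    (hw : IsAugWalk M M' k w) : IsAugPathComp M M' (walkEdges w k) k := by
  refine ⟨hw.walkEdges_subset, hw.isolated hM hM', fun i => w i, fun i j hij =>
    Fin.ext (hw.injOn i (by omega) j (by omega) hij), ?_, fun i hi => ?_, fun i hi => ?_,
    hw.head_notMem, hw.last_notMem⟩
  · ext e
    simp only [mem_walkEdges, mem_image, mem_univ, true_and]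
    constructor
    · rintro ⟨i, hi, rfl⟩
      exact ⟨⟨i, hi⟩, rfl⟩
    · rintro ⟨i, rfl⟩
      exact ⟨i, i.2, rfl⟩
  · simpa [altLayer, hi] using hw.mem_altLayer i i.2
  · simpa [altLayer, hi] using hw.mem_altLayer i i.2

namespace IsAugPathComp

theorem card_eq (hP : IsAugPathComp M M' P k) : #P = k := by
  obtain ⟨w, hw, rfl⟩ := hP.exists_isAugWalk
  exact hw.card_walkEdges

theorem mod_two_eq_one (hP : IsAugPathComp M M' P k) (hk : 1 ≤ k) : k % 2 = 1 := by
  obtain ⟨w, hw, -⟩ := hP.exists_isAugWalk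
  exact hw.mod_two_eq_one hk

theorem card_inter_snd (hP : IsAugPathComp M M' P k) : #(P ∩ M') = #P / 2 := by
  obtain ⟨w, hw, rfl⟩ := hP.exists_isAugWalk
  rw [hw.card_walkEdges_inter_snd, hw.card_walkEdges]

theorem card_inter_fst (hP : IsAugPathComp M M' P k) (hk : 1 ≤ k) :
    #(P ∩ M) = #(P ∩ M') + 1 := by
  have hsum := card_inter_add_card_inter_of_subset_symmDiff hP.1
  have hodd := hP.mod_two_eq_one hk
  rw [hP.card_inter_snd, hP.card_eq] at *
  omega

theorem eq_of_not_disjoint (hP : IsAugPathComp M M' P k) (hQ : IsAugPathComp M M' Q l)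
    (hPQ : ¬Disjoint P Q) : P = Q := by
  obtain ⟨w, -, hPw⟩ := hP.exists_isAugWalk
  obtain ⟨w', -, hQw'⟩ := hQ.exists_isAugWalk
  refine subset_antisymm ?_ ?_
  · rw [hPw] at hP hPQ ⊢
    exact walkEdges_subset_of_isolated hP.1 hQ.2.1 hPQ
  · rw [hQw'] at hQ hPQ ⊢
    exact walkEdges_subset_of_isolated hQ.1 hP.2.1 fun h => hPQ h.symm

end IsAugPathComp

end AugmentingPathComponent

section Counting

variable {V : Type*} [DecidableEq V] {M M' P : Finset (Sym2 V)} {k : ℕ}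

def augComps (M M' : Finset (Sym2 V)) : Finset (Finset (Sym2 V)) :=
  (M ∆ M').powerset.filter fun P => ∃ k, 1 ≤ k ∧ IsAugPathComp M M' P k

theorem mem_augComps : P ∈ augComps M M' ↔ ∃ k, 1 ≤ k ∧ IsAugPathComp M M' P k := by
  rw [augComps, mem_filter, mem_powerset, and_iff_right_iff_imp]
  rintro ⟨k, -, hP⟩
  exact hP.1

theorem isAugPathComp_iff_mem_augComps (hk : 1 ≤ k) :
    IsAugPathComp M M' P k ↔ P ∈ augComps M M' ∧ #P = k := by
  refine ⟨fun hP => ⟨mem_augComps.2 ⟨k, hk, hP⟩, hP.card_eq⟩, ?_⟩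
  rintro ⟨hP, rfl⟩
  obtain ⟨l, -, hl⟩ := mem_augComps.1 hP
  rwa [← hl.card_eq] at hl

theorem card_mod_two_of_mem_augComps (hP : P ∈ augComps M M') : #P % 2 = 1 := by
  obtain ⟨k, hk, hP⟩ := mem_augComps.1 hP
  rw [hP.card_eq]
  exact hP.mod_two_eq_one hk

theorem filter_isAugPathComp_eq_filter_augComps (hk : 1 ≤ k) :
    (M ∆ M').powerset.filter (IsAugPathComp M M' · k) = (augComps M M').filter (#· = k) := by
  ext P
  rw [mem_filter, mem_filter, isAugPathComp_iff_mem_augComps hk]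
  exact ⟨fun h => h.2, fun h => ⟨(mem_filter.1 h.1).1, h⟩⟩

theorem filter_exists_isAugPathComp_eq_filter_augComps (hk : 1 ≤ k) :
    (M ∆ M').powerset.filter (fun P => ∃ l, k ≤ l ∧ IsAugPathComp M M' P l) =
      (augComps M M').filter (k ≤ #·) := by
  ext P
  simp only [mem_filter]
  constructor
  · rintro ⟨-, l, hl, hP⟩
    exact ⟨mem_augComps.2 ⟨l, by omega, hP⟩, hP.card_eq ▸ hl⟩
  · rintro ⟨hP, hl⟩
    exact ⟨(mem_filter.1 hP).1, #P, hl, (isAugPathComp_iff_mem_augComps (by omega)).2 ⟨hP, rfl⟩⟩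

theorem pairwiseDisjoint_augComps : (augComps M M' : Set (Finset (Sym2 V))).PairwiseDisjoint id :=
  fun P hP Q hQ hne => by
    obtain ⟨k, -, hP⟩ := mem_augComps.1 hP
    obtain ⟨l, -, hQ⟩ := mem_augComps.1 hQ
    exact not_not.1 fun h => hne (hP.eq_of_not_disjoint hQ h)

theorem sum_card_div_two_augComps_le : ∑ P ∈ augComps M M', #P / 2 ≤ #M' := by
  calc ∑ P ∈ augComps M M', #P / 2 = ∑ P ∈ augComps M M', #(P ∩ M') :=
        sum_congr rfl fun P hP => by
          obtain ⟨k, -, hP⟩ := mem_augComps.1 hP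
          exact hP.card_inter_snd.symm
    _ = #((augComps M M').biUnion fun P => P ∩ M') :=
        (card_biUnion (pairwiseDisjoint_augComps.mono fun _ => inter_subset_left)).symm
    _ ≤ #M' := card_le_card (biUnion_subset.2 fun _ _ => inter_subset_right)

theorem exists_isMatchingSet_card_eq (hM : IsMatchingSet M) (hM' : IsMatchingSet M') :
    ∃ N ⊆ M ∪ M', IsMatchingSet N ∧ #N = #M' + #(augComps M M') := by
  set A := augComps M M'
  set S := A.biUnion id
  have hcross : ∀ e ∈ M' \ S, ∀ f ∈ S ∩ M, ∀ v ∈ e, v ∉ f := by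
    intro e he f hf v hve hvf
    obtain ⟨heM', heS⟩ := mem_sdiff.1 he
    obtain ⟨hfS, hfM⟩ := mem_inter.1 hf
    obtain ⟨P, hPA, hfP⟩ := mem_biUnion.1 hfS
    by_cases heM : e ∈ M
    · exact heS (hM.eq_of_mem_of_mem heM hfM hve hvf ▸ hfS)
    · obtain ⟨k, -, hP⟩ := mem_augComps.1 hPA
      exact hP.2.1 e (mem_symmDiff.2 (Or.inr ⟨heM', heM⟩))
        (fun heP => heS (mem_biUnion.2 ⟨P, hPA, heP⟩)) v hve f hfP hvf
  have hinter : ∀ T : Finset (Sym2 V), #(S ∩ T) = ∑ P ∈ A, #(P ∩ T) := fun T => by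
    rw [biUnion_inter, card_biUnion (pairwiseDisjoint_augComps.mono fun _ => inter_subset_left)]
    rfl
  have hflip : #(S ∩ M) = #(S ∩ M') + #A := by
    rw [hinter, hinter, card_eq_sum_ones A, ← sum_add_distrib]
    refine sum_congr rfl fun P hP => ?_
    obtain ⟨k, hk, hP⟩ := mem_augComps.1 hP
    exact hP.card_inter_fst hk
  refine ⟨(M' \ S) ∪ (S ∩ M), union_subset (sdiff_subset.trans subset_union_right)
      (inter_subset_right.trans subset_union_left),
    (hM'.mono sdiff_subset).union (hM.mono inter_subset_right) hcross, ?_⟩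
  have hdisj : Disjoint (M' \ S) (S ∩ M) :=
    disjoint_left.2 fun e he he' => (mem_sdiff.1 he).2 (mem_inter.1 he').1
  have hsplit := card_sdiff_add_card_inter M' S
  rw [card_union_of_disjoint hdisj, hflip, inter_comm S M']
  omega

variable [Fintype V]

theorem IsAugPathComp.card_mVerts_sdiff_le (hP : IsAugPathComp M M' P k) :
    #(mVerts P \ mVerts M') ≤ 2 := by
  obtain ⟨w, hw, rfl⟩ := hP.exists_isAugWalk
  calc #(mVerts (walkEdges w k) \ mVerts M') ≤ #{w 0, w k} := card_le_card fun x hx => by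
        simp only [mVerts, mem_sdiff, mem_filter, mem_univ, true_and, not_exists, not_and] at hx
        obtain ⟨⟨g, hg, hxg⟩, hx⟩ := hx
        rcases hw.eq_head_or_eq_last hx hg hxg with rfl | rfl <;> simp
    _ ≤ 2 := card_le_two

theorem exists_even_altWalk_or_mem_mVerts_augComps (hM : IsMatchingSet M)
    (hM' : IsMatchingSet M') {v : V} (hv : v ∈ mVerts M \ mVerts M') :
    (∃ z ∈ mVerts M' \ mVerts M, ∃ k w, IsAltWalk M M' k w ∧ k % 2 = 0 ∧ w 0 = v ∧ w k = z) ∨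
      ∃ P ∈ augComps M M', v ∈ mVerts P := by
  simp only [mVerts, mem_sdiff, mem_filter, mem_univ, true_and, not_exists, not_and] at hv ⊢
  obtain ⟨⟨e, he, hve⟩, hv'⟩ := hv
  obtain ⟨k, w, hw, rfl, hmax⟩ := IsAltWalk.exists_maximal hM hM' hv'
  have hk : 1 ≤ k := Nat.pos_of_ne_zero fun hk => by subst hk; exact hmax e he hve
  rcases Nat.mod_two_eq_zero_or_one k with hpar | hpar
  · have hlast := hw.mem_altLayer (k - 1) (by omega)
    rw [altLayer_congr (j := 1) (by omega), Nat.sub_add_cancel hk] at hlast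
    refine Or.inl ⟨w k, ⟨⟨_, hlast, Sym2.mem_mk_right _ _⟩, ?_⟩, k, w, hw, hpar, rfl, rfl⟩
    exact fun f hf => hmax f (by rwa [altLayer_congr (j := 0) hpar])
  · have haug : IsAugWalk M M' k w :=
      ⟨hw, fun f hf => hmax f (by rwa [altLayer_congr (j := 1) hpar])⟩
    exact Or.inr ⟨_, mem_augComps.2 ⟨k, hk, isAugPathComp_walkEdges hM hM' haug⟩,
      _, walkEdge_mem_walkEdges hk, Sym2.mem_mk_left _ _⟩

theorem card_mVerts_sdiff_le (hM : IsMatchingSet M) (hM' : IsMatchingSet M') :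
    #(mVerts M \ mVerts M') ≤ #(mVerts M' \ mVerts M) + 2 * #(augComps M M') := by
  set U := mVerts M \ mVerts M'
  set R := U.filter fun v => ∃ z ∈ mVerts M' \ mVerts M,
    ∃ k w, IsAltWalk M M' k w ∧ k % 2 = 0 ∧ w 0 = v ∧ w k = z
  set B := (augComps M M').biUnion fun P => mVerts P \ mVerts M'
  have hU : U ⊆ R ∪ B := fun v hv => by
    rcases exists_even_altWalk_or_mem_mVerts_augComps hM hM' hv with h | ⟨P, hP, hvP⟩
    · exact mem_union_left _ (mem_filter.2 ⟨hv, h⟩)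
    · exact mem_union_right _ (mem_biUnion.2 ⟨P, hP, mem_sdiff.2 ⟨hvP, (mem_sdiff.1 hv).2⟩⟩)
  have hR : #R ≤ #(mVerts M' \ mVerts M) := by
    refine card_le_card_of_forall_subsingleton
      (fun v z => ∃ k w, IsAltWalk M M' k w ∧ k % 2 = 0 ∧ w 0 = v ∧ w k = z)
      (fun v hv => (mem_filter.1 hv).2) fun z _ => ?_
    rintro v ⟨-, k, w, hw, hk, rfl, rfl⟩ v' ⟨-, k', w', hw', hk', rfl, hz⟩
    exact hw.head_eq_of_last_eq hM hM' hw' (by omega) hz.symm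
  have hB : #B ≤ 2 * #(augComps M M') := by
    calc #B ≤ ∑ P ∈ augComps M M', #(mVerts P \ mVerts M') := card_biUnion_le
      _ ≤ ∑ _P ∈ augComps M M', 2 := sum_le_sum fun P hP => by
          obtain ⟨k, -, hP⟩ := mem_augComps.1 hP
          exact hP.card_mVerts_sdiff_le
      _ = 2 * #(augComps M M') := by rw [sum_const, smul_eq_mul, mul_comm]
  calc #U ≤ #(R ∪ B) := card_le_card hU
    _ ≤ #R + #B := card_union_le R B
    _ ≤ _ := by omega

theorem card_le_card_add_card_augComps (hM : IsMatchingSet M) (hM' : IsMatchingSet M') :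
    #M ≤ #M' + #(augComps M M') := by
  have h := card_mVerts_sdiff_le hM hM'
  have hMv := card_sdiff_add_card_inter (mVerts M) (mVerts M')
  have hM'v := card_sdiff_add_card_inter (mVerts M') (mVerts M)
  rw [hM.card_mVerts] at hMv
  rw [hM'.card_mVerts, inter_comm] at hM'v
  omega

end Counting

theorem augmenting_path_counts_general {V : Type*} [Fintype V] [DecidableEq V]
    (E M M' : Finset (Sym2 V))
    (hME : M ⊆ E) (hMm : IsMatchingSet M)
    (hmax : ∀ N : Finset (Sym2 V), N ⊆ E → IsMatchingSet N → N.card ≤ M.card)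
    (hM'E : M' ⊆ E) (hM'm : IsMatchingSet M') :
    (((M ∆ M').powerset.filter fun P => IsAugPathComp M M' P 3).card +
        2 * ((M ∆ M').powerset.filter fun P => ∃ k, 5 ≤ k ∧ IsAugPathComp M M' P k).card ≤
      M'.card) ∧
    ((M ∆ M').powerset.filter fun P => IsAugPathComp M M' P 1).card +
        ((M ∆ M').powerset.filter fun P => IsAugPathComp M M' P 3).card +
        ((M ∆ M').powerset.filter fun P => ∃ k, 5 ≤ k ∧ IsAugPathComp M M' P k).card =
      M.card - M'.card := by
  obtain ⟨N, hN, hNm, hNcard⟩ := exists_isMatchingSet_card_eq hMm hM'm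
  have hlower := hmax N (hN.trans (union_subset hME hM'E)) hNm
  have hupper := card_le_card_add_card_augComps hMm hM'm
  rw [filter_isAugPathComp_eq_filter_augComps le_rfl,
    filter_isAugPathComp_eq_filter_augComps (by norm_num : 1 ≤ 3),
    filter_exists_isAugPathComp_eq_filter_augComps (by norm_num : 1 ≤ 5),
    ← card_eq_card_filter_one_add_three_add_ge_five fun P => card_mod_two_of_mem_augComps]
  refine ⟨(card_filter_three_add_two_mul_ge_five_le _ _).trans sum_card_div_two_augComps_le, ?_⟩
  omega

theorem augmenting_path_counts {V : Type*} [Fintype V] [DecidableEq V]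
    (E M M' : Finset (Sym2 V)) (hE : EdgeSimple E)
    (hME : M ⊆ E) (hMm : IsMatchingSet M)
    (hmax : ∀ N : Finset (Sym2 V), N ⊆ E → IsMatchingSet N → N.card ≤ M.card)
    (hM'E : M' ⊆ E) (hM'm : IsMatchingSet M') :
    (((M ∆ M').powerset.filter fun P => IsAugPathComp M M' P 3).card +
        2 * ((M ∆ M').powerset.filter fun P => ∃ k, 5 ≤ k ∧ IsAugPathComp M M' P k).card ≤
      M'.card) ∧
    ((M ∆ M').powerset.filter fun P => IsAugPathComp M M' P 1).card +
        ((M ∆ M').powerset.filter fun P => IsAugPathComp M M' P 3).card +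
        ((M ∆ M').powerset.filter fun P => ∃ k, 5 ≤ k ∧ IsAugPathComp M M' P k).card =
      M.card - M'.card :=
  augmenting_path_counts_general E M M' hME hMm hmax hM'E hM'm
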